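/- Let (T, M) be a valuation domain with residue field k and residue map π : T → k, and let D be an integral domain with fraction field k, viewed as a subring of k. If every flat overring of D is a localization of D (at some multiplicative subset of D), then every flat overring of the pullback A := D ×_k T = π⁻¹(D) is a localization of A (at some multiplicative subset of A). -/

import Mathlib

/-!
Since `T` is a valuation ring and the maximal ideal `M` of `T` lies in `A = π⁻¹(D)`, every
overring `S` of `A` is comparable with `T`. In both cases `S` is the localization of `A` at the
elements of `A` that are units of `S`.

If `T ⊆ S`, no flatness is needed: an element of `S \ T` is the inverse of an element of
`M ⊆ A`, and an element `s ∈ T` has residue `d / w` with `d, w ∈ D`, so `s t ∈ A` for any lift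
`t ∈ A` of `w`, which is a unit of `T ⊆ S`.

If `S ⊆ T`, then `M` is the kernel of `S → π(S)`, so `π(S) ≅ D ⊗_A S` is a flat overring of `D`,
hence a localization `W⁻¹ D`. Lifting a fraction `π(s) = d / w` back to `A` gives `s t ∈ A`, where
`t` lifts `w`; `t` is a unit of `S` because `π(t)` is a unit of `π(S)` and every element of `T`
with residue `1` lies in `A`.
-/

open IsLocalRing TensorProduct

namespace Subring

variable {R : Type*} [CommRing R]

def HasUnitDenominators (A S : Subring R) : Prop :=
  ∀ s ∈ S, ∃ a ∈ A, (∃ y ∈ S, a * y = 1) ∧ s * a ∈ A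

theorem isLocalization_comap_isUnit {A S : Subring R} (hAS : A ≤ S)
    (h : A.HasUnitDenominators S) :
    @IsLocalization A _ ((IsUnit.submonoid S).comap (inclusion hAS)) S _
      (inclusion hAS).toAlgebra := by
  let _ := (inclusion hAS).toAlgebra
  refine ⟨?_, ?_, ?_⟩
  · rintro ⟨a, ha⟩
    exact (IsUnit.mem_submonoid_iff _).1 ha
  · rintro ⟨s, hs⟩
    obtain ⟨a, ha, ⟨y, hy, hay⟩, hsa⟩ := h s hs
    refine ⟨⟨⟨s * a, hsa⟩, ⟨a, ha⟩, ?_⟩, rfl⟩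
    exact (IsUnit.mem_submonoid_iff _).2 (.of_mul_eq_one (⟨y, hy⟩ : S) (Subtype.ext hay))
  · intro x y hxy
    exact ⟨1, by rw [inclusion_injective hAS hxy]⟩

end Subring

theorem Module.Flat.of_surjective_algHom {A D S E : Type*} [CommRing A] [CommRing D]
    [CommRing S] [CommRing E] [Algebra A D] [Algebra A S] [Algebra D E] [Algebra A E]
    [IsScalarTower A D E] [Module.Flat A S] (hD : Function.Surjective (algebraMap A D))
    (g : S →ₐ[A] E) (hg : Function.Surjective g)
    (hker : ∀ s, g s = 0 → ∃ a, algebraMap A D a = 0 ∧ algebraMap A S a = s) :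
    Module.Flat D E := by
  let Φ : D ⊗[A] S →ₐ[D] E :=
    Algebra.TensorProduct.lift (Algebra.ofId D E) g fun _ _ ↦ .all _ _
  have hΦ : ∀ s, Φ (1 ⊗ₜ s) = g s := fun s ↦ by simp [Φ]
  have hinj : Function.Injective Φ := by
    refine (injective_iff_map_eq_zero Φ).2 fun x hx ↦ ?_
    obtain ⟨s, rfl⟩ := Algebra.TensorProduct.includeRight_surjective S hD x
    obtain ⟨a, ha, rfl⟩ := hker s (by simpa [hΦ] using hx)
    rw [Algebra.TensorProduct.includeRight_apply, Algebra.algebraMap_eq_smul_one,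
      ← TensorProduct.smul_tmul, ← Algebra.algebraMap_eq_smul_one, ha, TensorProduct.zero_tmul]
  have hsurj : Function.Surjective Φ := fun e ↦
    let ⟨s, hs⟩ := hg e
    ⟨1 ⊗ₜ s, (hΦ s).trans hs⟩
  exact Module.Flat.of_linearEquiv (LinearEquiv.ofBijective Φ.toLinearMap ⟨hinj, hsurj⟩).symm

theorem IsLocalRing.isUnit_of_map_ne_zero {R S : Type*} [CommRing R] [IsLocalRing R]
    [Semiring S] {f : R →+* S} (hf : maximalIdeal R ≤ RingHom.ker f) {x : R} (hx : f x ≠ 0) :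
    IsUnit x := by
  by_contra h
  exact hx (hf h)

theorem ValuationRing.exists_mem_maximalIdeal_mul_eq_one {K : Type*} [Field K] {T : Subring K}
    [ValuationRing T] [IsFractionRing T K] {x : K} (hx : x ∉ T) :
    ∃ m ∈ maximalIdeal T, (m : K) * x = 1 := by
  have hx0 : x ≠ 0 := by rintro rfl; exact hx T.zero_mem
  obtain ⟨t, ht⟩ | ⟨m, hm⟩ := ValuationRing.isInteger_or_isInteger T x
  · exact absurd (ht ▸ t.2) hx
  · have hmx : (m : K) * x = 1 := by rw [show (m : K) = x⁻¹ from hm, inv_mul_cancel₀ hx0]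
    refine ⟨m, fun hu ↦ hx ?_, hmx⟩
    obtain ⟨v, hv⟩ := hu.exists_right_inv
    have : x = v := by
      have hv' : (m : K) * v = 1 := congrArg Subtype.val hv
      exact mul_left_cancel₀ (left_ne_zero_of_mul_eq_one hmx) (hmx.trans hv'.symm)
    exact this ▸ v.2

section Pullback

variable {K k : Type*} [Field K] [Field k] {T : Subring K} {π : T →+* k} {D : Subring k}
  {S : Subring K}

variable (π D) in
def pullback : Subring K := (D.comap π).map T.subtype

theorem coe_mem_pullback_iff {t : T} : (t : K) ∈ pullback π D ↔ π t ∈ D := by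
  refine ⟨?_, fun ht ↦ ⟨t, ht, rfl⟩⟩
  rintro ⟨t', ht', h⟩
  rwa [← Subtype.ext h]

theorem pullback_le : pullback π D ≤ T := by
  rintro _ ⟨t, -, rfl⟩
  exact t.2

variable (π S) in
def residueImage : Subring k := (S.comap T.subtype).map π

theorem mem_residueImage {e : k} : e ∈ residueImage π S ↔ ∃ t : T, (t : K) ∈ S ∧ π t = e := by
  simp [residueImage]

theorem le_residueImage (hπ : Function.Surjective π) (hAS : pullback π D ≤ S) :
    D ≤ residueImage π S := fun d hd ↦
  let ⟨t, ht⟩ := hπ d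
  mem_residueImage.2 ⟨t, hAS (coe_mem_pullback_iff.2 (ht ▸ hd)), ht⟩

section IsLocalRing

variable [IsLocalRing T]

theorem coe_mem_pullback_of_mem_maximalIdeal (hker : RingHom.ker π = maximalIdeal T) {m : T}
    (hm : m ∈ maximalIdeal T) : (m : K) ∈ pullback π D :=
  coe_mem_pullback_iff.2 (by rw [← hker, RingHom.mem_ker] at hm; exact hm ▸ D.zero_mem)

theorem exists_mem_pullback_mul_eq_one (hker : RingHom.ker π = maximalIdeal T) {t : T}
    (ht : π t = 1) : ∃ v ∈ pullback π D, (t : K) * v = 1 := by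
  obtain ⟨v, hv⟩ := (isUnit_of_map_ne_zero hker.ge (ht ▸ one_ne_zero)).exists_right_inv
  have hπv : π v = 1 := by simpa [ht] using congrArg π hv
  exact ⟨v, coe_mem_pullback_iff.2 (hπv ▸ D.one_mem), congrArg Subtype.val hv⟩

theorem flat_residueImage (hπ : Function.Surjective π) (hker : RingHom.ker π = maximalIdeal T)
    (hAS : pullback π D ≤ S) (hST : S ≤ T)
    (hflat : @Module.Flat (pullback π D) S _ _ (Subring.inclusion hAS).toAlgebra.toModule) :
    @Module.Flat D (residueImage π S) _ _
      (Subring.inclusion (le_residueImage hπ hAS)).toAlgebra.toModule := by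
  let _ : Algebra (pullback π D) S := (Subring.inclusion hAS).toAlgebra
  let ψ : pullback π D →+* D := (π.comp (Subring.inclusion pullback_le)).codRestrict D
    fun a ↦ coe_mem_pullback_iff (π := π).1 a.2
  let _ : Algebra (pullback π D) D := ψ.toAlgebra
  let _ : Algebra D (residueImage π S) := (Subring.inclusion (le_residueImage hπ hAS)).toAlgebra
  let _ : Algebra (pullback π D) (residueImage π S) :=
    ((Subring.inclusion (le_residueImage hπ hAS)).comp ψ).toAlgebra
  have : IsScalarTower (pullback π D) D (residueImage π S) := .of_algebraMap_eq fun _ ↦ rfl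
  let g : S →ₐ[pullback π D] residueImage π S :=
    { (π.comp (Subring.inclusion hST)).codRestrict (residueImage π S)
        fun s ↦ mem_residueImage.2 ⟨_, s.2, rfl⟩ with
      commutes' := fun _ ↦ rfl }
  refine Module.Flat.of_surjective_algHom (fun d ↦ ?_) g (fun e ↦ ?_) fun s hs ↦ ?_
  · obtain ⟨t, ht⟩ := hπ d
    exact ⟨⟨t, coe_mem_pullback_iff.2 (ht ▸ d.2)⟩, Subtype.ext ht⟩
  · obtain ⟨t, ht, hte⟩ := mem_residueImage.1 e.2
    exact ⟨⟨t, ht⟩, Subtype.ext hte⟩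
  · have hs' : π (Subring.inclusion hST s) = 0 := congrArg Subtype.val hs
    have hm : Subring.inclusion hST s ∈ maximalIdeal T := hker ▸ RingHom.mem_ker.2 hs'
    exact ⟨⟨s, coe_mem_pullback_of_mem_maximalIdeal hker hm⟩, Subtype.ext hs', rfl⟩

theorem pullback_hasUnitDenominators_of_le (hπ : Function.Surjective π)
    (hker : RingHom.ker π = maximalIdeal T) (hAS : pullback π D ≤ S) (hST : S ≤ T)
    (W : Submonoid D)
    (hW : @IsLocalization D _ W (residueImage π S) _
      (Subring.inclusion (le_residueImage hπ hAS)).toAlgebra) :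
    (pullback π D).HasUnitDenominators S := by
  let _ := (Subring.inclusion (le_residueImage hπ hAS)).toAlgebra
  intro s hs
  obtain ⟨⟨d, w⟩, hdw⟩ := IsLocalization.surj W
    (⟨π ⟨s, hST hs⟩, mem_residueImage.2 ⟨_, hs, rfl⟩⟩ : residueImage π S)
  obtain ⟨t, ht⟩ := hπ w
  obtain ⟨e, he⟩ := (IsLocalization.map_units (residueImage π S) w).exists_right_inv
  obtain ⟨t', ht'S, ht'⟩ := mem_residueImage.1 e.2
  obtain ⟨v, hvA, hv⟩ := exists_mem_pullback_mul_eq_one (D := D) hker (t := t * t')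
    (by rw [map_mul, ht, ht']; exact congrArg Subtype.val he)
  refine ⟨t, coe_mem_pullback_iff.2 (ht ▸ w.1.2), ⟨t' * v, S.mul_mem ht'S (hAS hvA), ?_⟩, ?_⟩
  · rw [← mul_assoc]
    exact hv
  · refine coe_mem_pullback_iff (t := (⟨s, hST hs⟩ : T) * t).2 ?_
    rw [map_mul, ht, show π ⟨s, hST hs⟩ * w = d from congrArg Subtype.val hdw]
    exact d.2

end IsLocalRing

variable [ValuationRing T] [IsFractionRing T K]

theorem le_or_le_of_pullback_le (hker : RingHom.ker π = maximalIdeal T)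
    (hAS : pullback π D ≤ S) : S ≤ T ∨ T ≤ S := by
  refine or_iff_not_imp_left.2 fun hST y hy ↦ ?_
  obtain ⟨x, hxS, hxT⟩ := SetLike.not_le_iff_exists.1 hST
  obtain ⟨m, hm, hmx⟩ := ValuationRing.exists_mem_maximalIdeal_mul_eq_one (K := K) hxT
  have hym : y * m ∈ S :=
    hAS (coe_mem_pullback_of_mem_maximalIdeal hker (Ideal.mul_mem_left _ ⟨y, hy⟩ hm))
  simpa [mul_assoc, hmx] using S.mul_mem hym hxS

theorem pullback_hasUnitDenominators_of_ge [IsFractionRing D k] (hπ : Function.Surjective π)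
    (hker : RingHom.ker π = maximalIdeal T) (hTS : T ≤ S) :
    (pullback π D).HasUnitDenominators S := by
  intro s hs
  by_cases hsT : s ∈ T
  · obtain ⟨⟨d, w⟩, hdw⟩ := IsLocalization.surj (nonZeroDivisors D) (π ⟨s, hsT⟩)
    obtain ⟨t, ht⟩ := hπ w
    have hw0 : π t ≠ 0 := ht ▸ fun h ↦ nonZeroDivisors.coe_ne_zero w (Subtype.ext h)
    obtain ⟨v, hv⟩ := (isUnit_of_map_ne_zero hker.ge hw0).exists_right_inv
    refine ⟨t, coe_mem_pullback_iff.2 (ht ▸ w.1.2), ⟨v, hTS v.2, congrArg Subtype.val hv⟩, ?_⟩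
    refine coe_mem_pullback_iff (t := (⟨s, hsT⟩ : T) * t).2 ?_
    rw [map_mul, ht, show π ⟨s, hsT⟩ * w = d from hdw]
    exact d.2
  · obtain ⟨m, hm, hms⟩ := ValuationRing.exists_mem_maximalIdeal_mul_eq_one (K := K) hsT
    refine ⟨m, coe_mem_pullback_of_mem_maximalIdeal hker hm, ⟨s, hs, hms⟩, ?_⟩
    rw [mul_comm, hms]
    exact (pullback π D).one_mem

end Pullback

theorem stmt_12 {K k : Type*} [Field K] [Field k] (T : Subring K)
    [ValuationRing T] [IsFractionRing T K]
    (π : T →+* k) (hπ : Function.Surjective π)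
    (hker : RingHom.ker π = IsLocalRing.maximalIdeal T)
    (D : Subring k) [IsFractionRing D k]
    (hD : ∀ S : Subring k, ∀ hDS : D ≤ S,
      @Module.Flat D S _ _ (RingHom.toAlgebra (Subring.inclusion hDS)).toModule →
        ∃ W : Submonoid D,
          @IsLocalization D _ W S _ (RingHom.toAlgebra (Subring.inclusion hDS))) :
    ∀ S : Subring K, ∀ hAS : (D.comap π).map T.subtype ≤ S,
      @Module.Flat ((D.comap π).map T.subtype) S _ _
          (RingHom.toAlgebra (Subring.inclusion hAS)).toModule →
        ∃ W : Submonoid ((D.comap π).map T.subtype),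
          @IsLocalization ((D.comap π).map T.subtype) _ W S _
            (RingHom.toAlgebra (Subring.inclusion hAS)) := by
  intro S hAS hflat
  refine ⟨_, Subring.isLocalization_comap_isUnit hAS ?_⟩
  rcases le_or_le_of_pullback_le hker hAS with hST | hTS
  · obtain ⟨W, hW⟩ := hD _ (le_residueImage hπ hAS) (flat_residueImage hπ hker hAS hST hflat)
    exact pullback_hasUnitDenominators_of_le hπ hker hAS hST W hW
  · exact pullback_hasUnitDenominators_of_ge hπ hker hTS
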